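/- Approximate diminishing returns for set augmentations (Lemma 3 of the paper): let F : Finset V → ℝ be a set function on a finite set V, let A ⊆ B ⊆ V, and let Y ⊆ V with Y ∩ B = ∅. Then F(A ∪ Y) − F(A) ≥ F(B ∪ Y) − F(B) + |B \ A| · |Y| · λ_F(B ∪ Y, 2). -/

import Mathlib

/-!
Write `c = λ_F(B ∪ Y, 2)`. The two-element case of the definition of the submodularity index
says that inside `B ∪ Y` adding one element `y` lowers the marginal gain of any other element `b`
by at least `c`. Telescoping over the elements of `Y` lowers the gain of a single `b` by `|Y| c`,
and telescoping once more over the elements of `B \ A` lowers the gain of `Y` by `|B \ A| |Y| c`.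
-/

open Finset

variable {V : Type*} [Fintype V] [DecidableEq V]

/-- The marginal gain `F_S(A) = F(A ∪ S) − F(A)` generalizes `F_x(A)` via `S = {x}`.
The submodularity index (SmI) of `F` for a set `L ⊆ V` and cardinality `k` is the
minimum of `∑ x ∈ S, F_x(A) − F_S(A)` over all pairs `(S, A)` with `A ⊆ L`,
`S ∩ A = ∅`, and `|S| ≤ k`. -/
noncomputable def smI (F : Finset V → ℝ) (L : Finset V) (k : ℕ) : ℝ :=
  (Finset.univ.filter (fun p : Finset V × Finset V =>
      p.2 ⊆ L ∧ p.1 ∩ p.2 = ∅ ∧ p.1.card ≤ k)).inf'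
    ⟨(∅, ∅), by simp⟩
    (fun p => (∑ x ∈ p.1, (F (p.2 ∪ {x}) - F p.2)) - (F (p.2 ∪ p.1) - F p.2))

theorem smI_le (F : Finset V → ℝ) {L S A : Finset V} {k : ℕ}
    (hA : A ⊆ L) (hSA : S ∩ A = ∅) (hS : #S ≤ k) :
    smI F L k ≤ (∑ x ∈ S, (F (A ∪ {x}) - F A)) - (F (A ∪ S) - F A) :=
  inf'_le _ (b := (S, A)) (mem_filter.2 ⟨mem_univ _, hA, hSA, hS⟩)

section DiminishingReturns

variable {α : Type*} [DecidableEq α]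

def PairwiseDiminishingReturnsOn (F : Finset α → ℝ) (L : Finset α) (c : ℝ) : Prop :=
  ∀ A ⊆ L, ∀ b y, b ∉ A → y ∉ A → b ≠ y →
    F (insert b (insert y A)) - F (insert y A) ≤ F (insert b A) - F A - c

theorem marginal_union_le_of_pairwise {F : Finset α → ℝ} {L : Finset α} {c : ℝ}
    (hF : PairwiseDiminishingReturnsOn F L c) {A Y : Finset α} {b : α} (hL : A ∪ Y ⊆ L)
    (hAY : Disjoint A Y) (hbA : b ∉ A) (hbY : b ∉ Y) :
    F (insert b (A ∪ Y)) - F (A ∪ Y) ≤ F (insert b A) - F A - #Y * c := by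
  induction Y using Finset.induction_on with
  | empty => simp
  | @insert y Y hyY ih =>
    rw [union_insert] at hL ⊢
    rw [disjoint_insert_right] at hAY
    rw [mem_insert, not_or] at hbY
    have hpair := hF (A ∪ Y) ((subset_insert _ _).trans hL) b y
      (by simp [hbA, hbY.2]) (by simp [hAY.1, hyY]) hbY.1
    have hstep := ih ((subset_insert _ _).trans hL) hAY.2 hbY.2
    rw [card_insert_of_notMem hyY]
    push_cast
    linarith

theorem union_marginal_le_of_pairwise {F : Finset α → ℝ} {L : Finset α} {c : ℝ}
    (hF : PairwiseDiminishingReturnsOn F L c) {A D Y : Finset α} (hL : A ∪ D ∪ Y ⊆ L)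
    (hAY : Disjoint A Y) (hDA : Disjoint D A) (hDY : Disjoint D Y) :
    F (A ∪ D ∪ Y) - F (A ∪ D) ≤ F (A ∪ Y) - F A - #D * #Y * c := by
  induction D using Finset.induction_on with
  | empty => simp
  | @insert b D hbD ih =>
    rw [union_insert, insert_union] at hL ⊢
    rw [disjoint_insert_left] at hDA hDY
    have hbAD : b ∉ A ∪ D := by simp [hDA.1, hbD]
    have hADY : Disjoint (A ∪ D) Y := disjoint_union_left.2 ⟨hAY, hDY.2⟩
    have hb := marginal_union_le_of_pairwise hF ((subset_insert _ _).trans hL) hADY hbAD hDY.1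
    have hD := ih ((subset_insert _ _).trans hL) hDA.2 hDY.2
    rw [card_insert_of_notMem hbD]
    push_cast
    linarith

end DiminishingReturns

theorem pairwiseDiminishingReturnsOn_smI (F : Finset V → ℝ) (L : Finset V) {k : ℕ}
    (hk : 2 ≤ k) :
    PairwiseDiminishingReturnsOn F L (smI F L k) := by
  intro A hA b y hbA hyA hby
  have hSA : {b, y} ∩ A = ∅ := disjoint_iff_inter_eq_empty.1 (by simp [hbA, hyA])
  have h := smI_le F hA hSA ((card_pair hby).le.trans hk)
  simp only [sum_pair hby, union_comm A, insert_union, ← insert_eq] at h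
  linarith

/-- Approximate diminishing returns for set augmentations (Lemma 3): if `A ⊆ B ⊆ V`
and `Y ⊆ V` with `Y ∩ B = ∅`, then
`F(A ∪ Y) − F(A) ≥ F(B ∪ Y) − F(B) + |B \ A| · |Y| · λ_F(B ∪ Y, 2)`. -/
theorem approx_diminishing_returns (F : Finset V → ℝ)
    (A B Y : Finset V) (hAB : A ⊆ B) (hYB : Y ∩ B = ∅) :
    F (A ∪ Y) - F A ≥
      F (B ∪ Y) - F B + ((B \ A).card : ℝ) * (Y.card : ℝ) * smI F (B ∪ Y) 2 := by
  have hBY : Disjoint B Y := (disjoint_iff_inter_eq_empty.2 hYB).symm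
  have h := union_marginal_le_of_pairwise (pairwiseDiminishingReturnsOn_smI F (B ∪ Y) le_rfl)
    (by rw [union_sdiff_of_subset hAB]) (hBY.mono_left hAB) sdiff_disjoint
    (hBY.mono_left sdiff_subset)
  rw [union_sdiff_of_subset hAB] at h
  linarith
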